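/- Let p: ℤ → ℤ be a function (a perversity) with p(n) ≤ 0 for all n. Let K and L be complexes of sheaves on a stratified space X such that for every stratum S, H^i(K)|_S = 0 and H^i(L)|_S = 0 for all i > p(dim S). Then for every stratum S, H^q(K ⊗^L L)|_S = 0 for all q > p(dim S). More precisely, using the Künneth spectral sequence E₂^{st} = ⊕_{a+b=t} Tor_{−s}(H^a(K), H^b(L)) ⇒ H^{s+t}(K ⊗^L L), the restriction to S of each E₂-term vanishes whenever s + t > p(dim S). -/

import Mathlib

/-! A negative `Tor` index kills the `E₂`-terms with `s > 0`. For `s ≤ 0` we have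
`a + b = t ≥ s + t > p(dim S)`, and since `p ≤ 0` makes `p(dim S)` subadditive
(`p + p ≤ p`), one of `a > p(dim S)`, `b > p(dim S)` holds, so one argument of
`Tor` already vanishes on `S`. Convergence of the Künneth spectral sequence then
transfers the vanishing to `𝓗^q(K ⊗^L L)`. -/

theorem lt_or_lt_of_nonpos_of_lt_add {α : Type*} [AddCommMonoid α] [LinearOrder α]
    [IsOrderedAddMonoid α] {p a b : α} (hp : p ≤ 0) (h : p < a + b) : p < a ∨ p < b := by
  by_contra! hab
  exact h.not_ge ((add_le_add hab.1 hab.2).trans (add_le_of_nonpos_left hp))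

/-- `VK i σ`, `VL i σ`, `VKL i σ` say that `𝓗^i` of `K`, `L`, `K ⊗^L L` vanishes on the
stratum `σ`, and `TorV n a b σ` that `Tor_n(𝓗^a K, 𝓗^b L)` vanishes on `σ`. -/
theorem kunneth_perversity_subadditive
    (Strata : Type*) (dim : Strata → ℕ)
    (p : ℤ → ℤ) (hp : ∀ n, p n ≤ 0)
    (VK VL VKL : ℤ → Strata → Prop) (TorV : ℤ → ℤ → ℤ → Strata → Prop)
    -- `Tor_n = 0` for `n < 0`
    (hTorNeg : ∀ n a b σ, n < 0 → TorV n a b σ)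
    -- `Tor` is a bifunctor, so it vanishes on a stratum as soon as one of its
    -- arguments does
    (hTorZero : ∀ n a b σ, VK a σ ∨ VL b σ → TorV n a b σ)
    -- convergence of the Künneth spectral sequence
    -- `E₂^{st} = ⊕_{a+b=t} Tor_{-s}(𝓗^a K, 𝓗^b L) ⇒ 𝓗^{s+t}(K ⊗^L L)`:
    -- if all `E₂`-terms contributing to total degree `q` vanish on a stratum,
    -- then so does `𝓗^q(K ⊗^L L)`
    (hconv : ∀ (q : ℤ) (σ : Strata),
      (∀ s t a b : ℤ, s + t = q → a + b = t → TorV (-s) a b σ) → VKL q σ)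
    -- `K, L ∈ ^pD^{≤0}`
    (hK : ∀ (i : ℤ) (σ : Strata), p (dim σ) < i → VK i σ)
    (hL : ∀ (i : ℤ) (σ : Strata), p (dim σ) < i → VL i σ) :
    (∀ (s t a b : ℤ) (σ : Strata), p (dim σ) < s + t → a + b = t →
        TorV (-s) a b σ) ∧
    (∀ (q : ℤ) (σ : Strata), p (dim σ) < q → VKL q σ) := by
  have e₂_vanish : ∀ (s t a b : ℤ) (σ : Strata), p (dim σ) < s + t → a + b = t →
      TorV (-s) a b σ := by
    intro s t a b σ hst rfl
    rcases lt_or_ge 0 s with hs | hs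
    · exact hTorNeg _ _ _ _ (neg_neg_of_pos hs)
    · rcases lt_or_lt_of_nonpos_of_lt_add (hp _) (hst.trans_le (add_le_of_nonpos_left hs))
        with ha | hb
      · exact hTorZero _ _ _ _ (Or.inl (hK _ _ ha))
      · exact hTorZero _ _ _ _ (Or.inr (hL _ _ hb))
  exact ⟨e₂_vanish, fun q σ hq => hconv q σ fun s t a b hst hab =>
    e₂_vanish s t a b σ (hst ▸ hq) hab⟩
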